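/- arXiv:1708.04813 — 7 statements merged into one kernel-verified Lean document; each statement's English description precedes it below -/
import Mathlib

section
/- Let z = (λ·H/(p·n0) − 1)/e. Then z > −1/e, there exists a unique real w > −1 with w·e^w = z, and the point t* = min{ L·ln 2 / (B·(w+1)), T } is the unique minimizer of F over the interval (0,T]. (This is the paper's closed-form optimal uploading/downloading duration, expressed through the principal branch W of the Lambert function as t* = min{ L ln 2 / (B(W(z)+1)), T }.) -/
/-!
Writing `2 ^ (L / (B t)) = exp (a / t)` with `a = L log 2 / B` and `c = p n0 / H`, the cost is
`F t = c t (exp (a / t) - 1) + λ t`, whose derivative `c ((1 - a / t) exp (a / t) - 1) + λ` is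
strictly increasing in `t` because `u ↦ (1 - u) eᵘ` decreases on `u ≥ 0`. Hence `F` decreases up
to the unique zero `t₀` of `F'` and increases after it, so `min t₀ T` is the strict minimiser on
`(0, T]`. Substituting `u = a / t₀ = w + 1`, the equation `F' t₀ = 0` becomes
`w eʷ = (λ / c - 1) / e`, which has a unique root `w > -1` since `w ↦ w eʷ` increases strictly
from `-1 / e` on `[-1, ∞)`.
-/

open Real Set

lemma hasDerivAt_mul_exp (x : ℝ) : HasDerivAt (fun x => x * exp x) ((x + 1) * exp x) x :=
  ((hasDerivAt_id' x).fun_mul (hasDerivAt_exp x)).congr_deriv (by ring)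

lemma hasDerivAt_one_sub_mul_exp (x : ℝ) :
    HasDerivAt (fun x => (1 - x) * exp x) (-x * exp x) x :=
  (((hasDerivAt_id' x).const_sub 1).fun_mul (hasDerivAt_exp x)).congr_deriv (by ring)

lemma strictMonoOn_mul_exp : StrictMonoOn (fun x => x * exp x) (Ici (-1)) := by
  refine strictMonoOn_of_deriv_pos (convex_Ici _) (by fun_prop) fun x hx => ?_
  rw [interior_Ici, mem_Ioi] at hx
  rw [(hasDerivAt_mul_exp x).deriv]
  exact mul_pos (by linarith) (exp_pos x)

lemma strictAntiOn_one_sub_mul_exp : StrictAntiOn (fun x => (1 - x) * exp x) (Ici 0) := by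
  refine strictAntiOn_of_deriv_neg (convex_Ici _) (by fun_prop) fun x hx => ?_
  rw [interior_Ici, mem_Ioi] at hx
  rw [(hasDerivAt_one_sub_mul_exp x).deriv, neg_mul]
  exact neg_neg_of_pos (mul_pos hx (exp_pos x))

lemma existsUnique_mul_exp_eq {z : ℝ} (hz : -1 / exp 1 < z) :
    ∃! w : ℝ, -1 < w ∧ w * exp w = z := by
  have hmin : (-1 : ℝ) * exp (-1) = -1 / exp 1 := by rw [exp_neg, div_eq_mul_inv]
  have hb : 0 ≤ max 0 z := le_max_left 0 z
  have hbound : z ≤ max 0 z * exp (max 0 z) :=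
    (le_max_right 0 z).trans (le_mul_of_one_le_right hb (one_le_exp hb))
  obtain ⟨w, hw, hwz⟩ := intermediate_value_Icc (neg_one_lt_zero.le.trans hb)
    (f := fun x => x * exp x) (by fun_prop) ⟨by rw [hmin]; exact hz.le, hbound⟩
  have hw1 : -1 < w := by
    refine hw.1.lt_of_ne fun h => hz.ne ?_
    rw [← hmin, h]
    exact hwz
  refine ⟨w, ⟨hw1, hwz⟩, fun y hy => strictMonoOn_mul_exp.injOn hy.1.le hw1.le ?_⟩
  exact hy.2.trans hwz.symm

lemma lt_of_strictAntiOn_Ioc_of_strictMonoOn_Ici {f : ℝ → ℝ} {t₀ T : ℝ}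
    (hanti : StrictAntiOn f (Ioc 0 t₀)) (hmono : StrictMonoOn f (Ici t₀)) :
    ∀ t ∈ Ioc 0 T, t ≠ min t₀ T → f (min t₀ T) < f t := by
  intro t ⟨ht0, htT⟩ hne
  rcases le_total t₀ T with h | h
  · rw [min_eq_left h] at hne ⊢
    rcases hne.lt_or_gt with hlt | hgt
    · exact hanti ⟨ht0, hlt.le⟩ ⟨ht0.trans hlt, le_rfl⟩ hlt
    · exact hmono (mem_Ici.2 le_rfl) hgt.le hgt
  · rw [min_eq_right h] at hne ⊢
    have hlt : t < T := lt_of_le_of_ne htT hne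
    exact hanti ⟨ht0, hlt.le.trans h⟩ ⟨ht0.trans hlt, h⟩ hlt

lemma lt_of_ne_min_of_strictMonoOn_deriv {f f' : ℝ → ℝ} {t₀ T : ℝ}
    (hf : ∀ t, 0 < t → HasDerivAt f (f' t) t) (hf' : StrictMonoOn f' (Ioi 0))
    (ht₀ : 0 < t₀) (hcrit : f' t₀ = 0) :
    ∀ t ∈ Ioc 0 T, t ≠ min t₀ T → f (min t₀ T) < f t := by
  have hcont : ∀ s ⊆ Ioi (0 : ℝ), ContinuousOn f s := fun s hs t ht =>
    (hf t (hs ht)).continuousAt.continuousWithinAt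
  refine lt_of_strictAntiOn_Ioc_of_strictMonoOn_Ici ?_ ?_
  · refine strictAntiOn_of_deriv_neg (convex_Ioc 0 t₀) (hcont _ Ioc_subset_Ioi_self)
      fun t ht => ?_
    rw [interior_Ioc] at ht
    rw [(hf t ht.1).deriv, ← hcrit]
    exact hf' ht.1 ht₀ ht.2
  · refine strictMonoOn_of_deriv_pos (convex_Ici t₀)
      (hcont _ fun t ht => ht₀.trans_le ht) fun t ht => ?_
    rw [interior_Ici] at ht
    rw [(hf t (ht₀.trans ht)).deriv, ← hcrit]
    exact hf' ht₀ (ht₀.trans ht) ht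

section ExpCost

variable {a c lam : ℝ}

noncomputable def expCost (a c lam t : ℝ) : ℝ := c * t * (exp (a / t) - 1) + lam * t

noncomputable def expCostDeriv (a c lam t : ℝ) : ℝ := c * ((1 - a / t) * exp (a / t) - 1) + lam

lemma hasDerivAt_expCost {t : ℝ} (ht : t ≠ 0) :
    HasDerivAt (expCost a c lam) (expCostDeriv a c lam t) t := by
  have hdiv : HasDerivAt (fun x => a / x) (-(a / t) / t) t := by
    simpa only [div_eq_mul_inv, mul_neg, neg_mul, pow_two, mul_inv, mul_assoc]
      using (hasDerivAt_inv ht).const_mul a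
  have h := (((hasDerivAt_id' t).const_mul c).fun_mul (hdiv.exp.sub_const 1)).fun_add
    ((hasDerivAt_id' t).const_mul lam)
  refine h.congr_deriv ?_
  simp only [expCostDeriv]
  field_simp
  ring

lemma strictMonoOn_expCostDeriv (ha : 0 < a) (hc : 0 < c) :
    StrictMonoOn (expCostDeriv a c lam) (Ioi 0) := by
  intro s hs t ht hst
  have hu : a / t < a / s := div_lt_div_of_pos_left ha hs hst
  have := strictAntiOn_one_sub_mul_exp (div_pos ha ht).le (div_pos ha hs).le hu
  simp only [expCostDeriv]
  gcongr

lemma expCostDeriv_div_eq_zero {w : ℝ} (ha : a ≠ 0) (hc : c ≠ 0) (hw : w + 1 ≠ 0)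
    (hwe : w * exp w = (lam / c - 1) / exp 1) : expCostDeriv a c lam (a / (w + 1)) = 0 := by
  have hu : a / (a / (w + 1)) = w + 1 := by field_simp
  have hwe' : w * exp (w + 1) = lam / c - 1 := by
    rw [exp_add, ← mul_assoc, hwe, div_mul_cancel₀ _ (exp_pos 1).ne']
  rw [expCostDeriv, hu]
  field_simp at hwe' ⊢
  linear_combination -hwe'

end ExpCost

lemma two_rpow_div_eq_exp (L B t : ℝ) : (2 : ℝ) ^ (L / (B * t)) = exp (L * log 2 / B / t) := by
  rw [rpow_def_of_pos two_pos]
  ring_nf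

theorem lambert_closed_form_optimal_duration_general
    (B n0 T H p L lam : ℝ)
    (hB : 0 < B) (hn0 : 0 < n0) (hT : 0 < T) (hH : 0 < H)
    (hp0 : 0 < p) (hL : 0 < L) (hlam : 0 < lam) :
    -1 / Real.exp 1 < (lam * H / (p * n0) - 1) / Real.exp 1 ∧
    (∃! w : ℝ, -1 < w ∧ w * Real.exp w = (lam * H / (p * n0) - 1) / Real.exp 1) ∧
    (∀ w : ℝ, -1 < w → w * Real.exp w = (lam * H / (p * n0) - 1) / Real.exp 1 →
      min (L * Real.log 2 / (B * (w + 1))) T ∈ Set.Ioc (0 : ℝ) T ∧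
      ∀ t ∈ Set.Ioc (0 : ℝ) T, t ≠ min (L * Real.log 2 / (B * (w + 1))) T →
        p * (n0 * min (L * Real.log 2 / (B * (w + 1))) T / H) *
            ((2 : ℝ) ^ (L / (B * min (L * Real.log 2 / (B * (w + 1))) T)) - 1) +
          lam * min (L * Real.log 2 / (B * (w + 1))) T <
        p * (n0 * t / H) * ((2 : ℝ) ^ (L / (B * t)) - 1) + lam * t) := by
  have hc : 0 < p * n0 / H := by positivity
  have ha : 0 < L * log 2 / B := by have := log_pos one_lt_two; positivity
  have hratio : lam * H / (p * n0) = lam / (p * n0 / H) := (div_div_eq_mul_div _ _ _).symm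
  have hcost : ∀ t, p * (n0 * t / H) * ((2 : ℝ) ^ (L / (B * t)) - 1) + lam * t =
      expCost (L * log 2 / B) (p * n0 / H) lam t := fun t => by
    rw [expCost, two_rpow_div_eq_exp]; ring
  have hx : 0 < lam * H / (p * n0) := by positivity
  have hz : -1 / exp 1 < (lam * H / (p * n0) - 1) / exp 1 :=
    div_lt_div_of_pos_right (by linarith) (exp_pos 1)
  refine ⟨hz, existsUnique_mul_exp_eq hz, fun w hw hwe => ?_⟩
  have hw1 : 0 < w + 1 := by linarith
  have ht₀ : 0 < L * log 2 / B / (w + 1) := div_pos ha hw1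
  rw [← div_div (L * log 2) B (w + 1)]
  simp only [hcost]
  rw [hratio] at hwe
  exact ⟨⟨lt_min ht₀ hT, min_le_right _ _⟩,
    lt_of_ne_min_of_strictMonoOn_deriv (fun t ht => hasDerivAt_expCost ht.ne')
      (strictMonoOn_expCostDeriv ha hc) ht₀
      (expCostDeriv_div_eq_zero ha.ne' hc.ne' hw1.ne' hwe)⟩

/-- Closed-form optimal transmission duration via the Lambert W function.
With `z = (λ*H/(p*n0) - 1)/e`: (i) `z > -1/e`; (ii) there is a unique `w > -1` with
`w * e^w = z`; and (iii) for this `w`, the point `t* = min (L*ln 2/(B*(w+1))) T` lies in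
`(0,T]` and is the unique minimizer over `(0,T]` of the per-task Lagrangian cost
`F(t) = p*(n0*t/H)*(2^(L/(B*t)) - 1) + λ*t`. -/
theorem lambert_closed_form_optimal_duration
    (B n0 T H p L lam : ℝ)
    (hB : 0 < B) (hn0 : 0 < n0) (hT : 0 < T) (hH : 0 < H)
    (hp0 : 0 < p) (hp1 : p ≤ 1) (hL : 0 < L) (hlam : 0 < lam) :
    -1 / Real.exp 1 < (lam * H / (p * n0) - 1) / Real.exp 1 ∧
    (∃! w : ℝ, -1 < w ∧ w * Real.exp w = (lam * H / (p * n0) - 1) / Real.exp 1) ∧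
    (∀ w : ℝ, -1 < w → w * Real.exp w = (lam * H / (p * n0) - 1) / Real.exp 1 →
      min (L * Real.log 2 / (B * (w + 1))) T ∈ Set.Ioc (0 : ℝ) T ∧
      ∀ t ∈ Set.Ioc (0 : ℝ) T, t ≠ min (L * Real.log 2 / (B * (w + 1))) T →
        p * (n0 * min (L * Real.log 2 / (B * (w + 1))) T / H) *
            ((2 : ℝ) ^ (L / (B * min (L * Real.log 2 / (B * (w + 1))) T)) - 1) +
          lam * min (L * Real.log 2 / (B * (w + 1))) T <
        p * (n0 * t / H) * ((2 : ℝ) ^ (L / (B * t)) - 1) + lam * t) :=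
  lambert_closed_form_optimal_duration_general B n0 T H p L lam hB hn0 hT hH hp0 hL hlam
end

section
/- For every L > 0 and B > 0, the function t ↦ t·(2^{L/(B·t)} − 1) is strictly convex on the interval (0,∞). -/
/-!
With `a = L / B` and `φ u = 2 ^ u - 1`, the energy is the perspective `t ↦ t * φ (a / t)` of the
strictly convex `φ`. For `z = α x + β y`, the point `a / z` is the convex combination of `a / x` and
`a / y` with weights `α x / z` and `β y / z`, so multiplying the strict convexity inequality of `φ`
at these points by `z` gives that of the perspective.
-/

open Set Real

theorem strictConvexOn_rpow_left {b : ℝ} (hb₀ : 0 < b) (hb₁ : b ≠ 1) :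
    StrictConvexOn ℝ univ fun x : ℝ ↦ b ^ x := by
  refine ⟨convex_univ, fun x _ y _ hxy α β hα hβ hαβ ↦ ?_⟩
  have hlog : log b ≠ 0 := log_ne_zero_of_pos_of_ne_one hb₀ hb₁
  simp only [rpow_def_of_pos hb₀, smul_eq_mul]
  calc exp (log b * (α * x + β * y)) = exp (α • (log b * x) + β • (log b * y)) := by
        congr 1; simp only [smul_eq_mul]; ring
    _ < α • exp (log b * x) + β • exp (log b * y) :=
        strictConvexOn_exp.2 trivial trivial (by simpa [hlog] using hxy) hα hβ hαβ

theorem StrictConvexOn.perspective {φ : ℝ → ℝ} (hφ : StrictConvexOn ℝ univ φ) {a : ℝ}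
    (ha : a ≠ 0) : StrictConvexOn ℝ (Ioi 0) fun t ↦ t * φ (a / t) := by
  refine ⟨convex_Ioi 0, fun x (hx : 0 < x) y (hy : 0 < y) hxy α β hα hβ hαβ ↦ ?_⟩
  simp only [smul_eq_mul]
  set z := α * x + β * y
  have hz : 0 < z := by positivity
  have hcomb : α * x / z * (a / x) + β * y / z * (a / y) = a / z := by
    field_simp
    linear_combination hαβ
  have hweights : α * x / z + β * y / z = 1 := by
    rw [← add_div, div_self hz.ne']
  have key := hφ.2 (mem_univ (a / x)) (mem_univ (a / y)) (by
    rw [Ne, div_eq_div_iff hx.ne' hy.ne']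
    exact fun h ↦ hxy (mul_left_cancel₀ ha h).symm)
    (by positivity : 0 < α * x / z) (by positivity : 0 < β * y / z) hweights
  simp only [smul_eq_mul, hcomb] at key
  calc z * φ (a / z) < z * (α * x / z * φ (a / x) + β * y / z * φ (a / y)) :=
        mul_lt_mul_of_pos_left key hz
    _ = α * (x * φ (a / x)) + β * (y * φ (a / y)) := by
        field_simp

/-- For bandwidth `B > 0` and `L > 0` bits, the transmission-energy function
`t ↦ t * (2 ^ (L / (B * t)) - 1)` is strictly convex on `(0, ∞)`. -/
theorem transmission_energy_strictConvexOn (L B : ℝ) (hL : 0 < L) (hB : 0 < B) :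
    StrictConvexOn ℝ (Set.Ioi (0 : ℝ))
      (fun t : ℝ => t * ((2 : ℝ) ^ (L / (B * t)) - 1)) := by
  have hpow : StrictConvexOn ℝ univ fun u : ℝ ↦ (2 : ℝ) ^ u - 1 :=
    ((strictConvexOn_rpow_left two_pos (by norm_num)).add_const (-1)).congr
      fun u _ ↦ (sub_eq_add_neg _ _).symm
  simpa only [div_div] using hpow.perspective (div_ne_zero hL.ne' hB.ne')
end

section
/- For every L > 0 and B > 0, the function t ↦ t·(2^{L/(B·t)} − 1) is strictly decreasing on the interval (0,∞); i.e., allotting a longer transmission duration strictly reduces the transmission energy. -/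
/-!
With `b = 2 ^ (L / B) > 1` the energy is `t * (b ^ t⁻¹ - b ^ 0)`, the slope of the secant of the
strictly convex function `s ↦ b ^ s` between `0` and `t⁻¹`. Such slopes strictly increase with
`t⁻¹`, hence strictly decrease with `t`.
-/

open Set Real

theorem StrictConvexOn.strictAntiOn_mul_sub_apply_inv {g : ℝ → ℝ}
    (hg : StrictConvexOn ℝ (Ici 0) g) :
    StrictAntiOn (fun t ↦ t * (g t⁻¹ - g 0)) (Ioi 0) := by
  intro s (hs : 0 < s) t (ht : 0 < t) hst
  have slope := hg.secant_strict_mono (a := 0) self_mem_Ici (inv_pos.2 ht).le (inv_pos.2 hs).le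
    (inv_pos.2 ht).ne' (inv_pos.2 hs).ne' (inv_strictAnti₀ hs hst)
  simpa only [sub_zero, div_inv_eq_mul, mul_comm] using slope

/-- For bandwidth `B > 0` and `L > 0` bits, the transmission-energy function
`t ↦ t * (2 ^ (L / (B * t)) - 1)` is strictly decreasing on `(0, ∞)`:
a longer transmission duration strictly reduces the transmission energy. -/
theorem transmission_energy_strictAntiOn (L B : ℝ) (hL : 0 < L) (hB : 0 < B) :
    StrictAntiOn (fun t : ℝ => t * ((2 : ℝ) ^ (L / (B * t)) - 1))
      (Set.Ioi (0 : ℝ)) := by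
  have hb : 1 < (2 : ℝ) ^ (L / B) := one_lt_rpow one_lt_two (div_pos hL hB)
  have key := ((strictConvexOn_rpow_left (zero_lt_one.trans hb) hb.ne').subset (subset_univ _)
    (convex_Ici 0)).strictAntiOn_mul_sub_apply_inv
  convert key using 3 with t
  rw [rpow_zero, ← rpow_mul zero_le_two, ← div_eq_mul_inv, div_div]
end

section
/- Let T > 0, L ≥ 0, and let r : ℝ → ℝ be integrable on [0,T] with r(τ) ≥ 0 for almost every τ ∈ [0,T] and ∫_0^T r(τ) dτ = L. Then ∫_0^T n0·(2^{r(τ)/B} − 1) dτ ≥ T·n0·(2^{L/(B·T)} − 1). That is, among all rate schedules delivering L bits within T seconds, the constant rate L/T minimizes the transmission energy. -/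
/-!
The power `x ↦ n0 * (2 ^ (x / B) - 1)` is convex in the rate, so by Jensen's inequality its value
at the mean rate `L / T` is at most its mean along the schedule; multiplying by `T` gives the claim.
The power is bounded below by `-n0`, which makes it integrable along `r` as soon as the energy is
finite, so Jensen applies whenever the right-hand side is not `∞`.
-/

open MeasureTheory Set

section Jensen

variable {α E : Type*} [MeasurableSpace α] {μ : Measure α}

theorem integrable_of_lintegral_ofReal_ne_top_of_ae_le [IsFiniteMeasure μ] {f : α → ℝ} {c : ℝ}
    (hfm : AEStronglyMeasurable f μ) (hc : ∀ᵐ x ∂μ, c ≤ f x)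
    (hfi : ∫⁻ x, ENNReal.ofReal (f x) ∂μ ≠ ⊤) : Integrable f μ := by
  have hshift : Integrable (fun x => f x - c) μ := by
    refine (lintegral_ofReal_ne_top_iff_integrable (hfm.sub aestronglyMeasurable_const) ?_).1 ?_
    · filter_upwards [hc] with x hx
      simpa using hx
    refine ne_top_of_le_ne_top (b := ∫⁻ x, ENNReal.ofReal (f x) + ENNReal.ofReal (-c) ∂μ) ?_
      (lintegral_mono fun x => by simpa [sub_eq_add_neg] using ENNReal.ofReal_add_le)
    rw [lintegral_add_right _ measurable_const, lintegral_const]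
    exact ENNReal.add_ne_top.2 ⟨hfi, ENNReal.mul_ne_top ENNReal.ofReal_ne_top (measure_ne_top _ _)⟩
  exact integrable_add_const_iff.1 (by simpa only [sub_eq_add_neg] using hshift)

theorem ofReal_integral_le_lintegral_ofReal {f : α → ℝ} (hf : Integrable f μ) :
    ENNReal.ofReal (∫ x, f x ∂μ) ≤ ∫⁻ x, ENNReal.ofReal (f x) ∂μ := by
  refine ENNReal.ofReal_le_of_le_toReal ?_
  rw [integral_eq_lintegral_pos_part_sub_lintegral_neg_part hf]
  exact sub_le_self _ ENNReal.toReal_nonneg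

variable [NormedAddCommGroup E] [NormedSpace ℝ E] [CompleteSpace E]

theorem ConvexOn.ofReal_measureReal_mul_map_average_le_lintegral [IsFiniteMeasure μ] [NeZero μ]
    {g : E → ℝ} {f : α → E} {c : ℝ} (hg : ConvexOn ℝ univ g) (hgc : Continuous g)
    (hgb : ∀ x, c ≤ g x) (hfi : Integrable f μ) :
    ENNReal.ofReal (μ.real univ * g (⨍ x, f x ∂μ)) ≤ ∫⁻ x, ENNReal.ofReal (g (f x)) ∂μ := by
  rcases eq_or_ne (∫⁻ x, ENNReal.ofReal (g (f x)) ∂μ) ⊤ with htop | htop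
  · exact htop ▸ le_top
  have hgi : Integrable (g ∘ f) μ := integrable_of_lintegral_ofReal_ne_top_of_ae_le
    (hgc.comp_aestronglyMeasurable hfi.aestronglyMeasurable) (ae_of_all _ fun x => hgb _) htop
  calc ENNReal.ofReal (μ.real univ * g (⨍ x, f x ∂μ))
      ≤ ENNReal.ofReal (μ.real univ * ⨍ x, g (f x) ∂μ) := by
        gcongr
        exact hg.map_average_le hgc.continuousOn isClosed_univ (ae_of_all _ fun _ => mem_univ _)
          hfi hgi
    _ = ENNReal.ofReal (∫ x, g (f x) ∂μ) := by
        rw [average_eq, smul_eq_mul, ← mul_assoc, mul_inv_cancel₀ measureReal_univ_ne_zero, one_mul]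
    _ ≤ ∫⁻ x, ENNReal.ofReal (g (f x)) ∂μ := ofReal_integral_le_lintegral_ofReal hgi

end Jensen

section TransmitPower

noncomputable def transmitPower (B n0 r : ℝ) : ℝ := n0 * ((2 : ℝ) ^ (r / B) - 1)

variable {B n0 : ℝ}

theorem continuous_transmitPower : Continuous (transmitPower B n0) := by
  unfold transmitPower
  fun_prop (disch := norm_num)

theorem convexOn_transmitPower (hn0 : 0 ≤ n0) : ConvexOn ℝ univ (transmitPower B n0) := by
  have hexp : ConvexOn ℝ univ fun r : ℝ => (2 : ℝ) ^ (r / B) := by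
    simpa [Function.comp_def, div_eq_mul_inv] using
      (convexOn_rpow_left two_pos).comp_linearMap (LinearMap.mulRight ℝ B⁻¹)
  exact ((hexp.smul hn0).sub (concaveOn_const n0 convex_univ)).congr fun r _ => by
    simp [transmitPower, mul_sub]

theorem neg_le_transmitPower (hn0 : 0 ≤ n0) (r : ℝ) : -n0 ≤ transmitPower B n0 r := by
  have := Real.rpow_nonneg zero_le_two (r / B)
  unfold transmitPower
  nlinarith

end TransmitPower

theorem constant_rate_minimizes_energy_general
    (B n0 T L : ℝ) (hn0 : 0 < n0) (hT : 0 < T)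
    (r : ℝ → ℝ) (hr : IntegrableOn r (Set.Icc 0 T))
    (hrL : ∫ τ in Set.Icc (0 : ℝ) T, r τ = L) :
    ENNReal.ofReal (T * (n0 * ((2 : ℝ) ^ (L / (B * T)) - 1))) ≤
      ∫⁻ τ in Set.Icc (0 : ℝ) T, ENNReal.ofReal (n0 * ((2 : ℝ) ^ (r τ / B) - 1)) := by
  set μ := volume.restrict (Icc (0 : ℝ) T)
  have hμ : μ.real univ = T := by simp [μ, hT.le]
  have : IsFiniteMeasure μ := isFiniteMeasure_restrict.2 measure_Icc_lt_top.ne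
  have : NeZero μ := ⟨fun h => hT.ne' (by simp [← hμ, h])⟩
  have havg : ⨍ τ, r τ ∂μ = L / T := by
    rw [average_eq, hμ, hrL, smul_eq_mul, inv_mul_eq_div]
  have hjensen :=
    (convexOn_transmitPower (B := B) hn0.le).ofReal_measureReal_mul_map_average_le_lintegral
      continuous_transmitPower (neg_le_transmitPower hn0.le) hr
  rwa [hμ, havg, transmitPower, div_div, mul_comm T B] at hjensen

/-- Among all rate schedules delivering `L` bits within `T` seconds, the constant
rate `L/T` minimizes the transmission energy: if `r` is integrable on `[0,T]`,
a.e. nonnegative there, and `∫_0^T r = L`, then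
`∫_0^T n0 * (2 ^ (r τ / B) - 1) dτ ≥ T * n0 * (2 ^ (L/(B*T)) - 1)`
(the energy integral of the nonnegative integrand is taken in `[0,∞]`). -/
theorem constant_rate_minimizes_energy
    (B n0 T L : ℝ) (hB : 0 < B) (hn0 : 0 < n0) (hT : 0 < T) (hL : 0 ≤ L)
    (r : ℝ → ℝ) (hr : IntegrableOn r (Set.Icc 0 T))
    (hr0 : ∀ᵐ τ ∂(volume.restrict (Set.Icc (0 : ℝ) T)), 0 ≤ r τ)
    (hrL : ∫ τ in Set.Icc (0 : ℝ) T, r τ = L) :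
    ENNReal.ofReal (T * (n0 * ((2 : ℝ) ^ (L / (B * T)) - 1))) ≤
      ∫⁻ τ in Set.Icc (0 : ℝ) T, ENNReal.ofReal (n0 * ((2 : ℝ) ^ (r τ / B) - 1)) :=
  constant_rate_minimizes_energy_general B n0 T L hn0 hT r hr hrL
end

section
/- If t* is a minimizer of Φ over the feasible set {t ∈ (0,T]^M : Σ_{m=1}^M t_m ≤ T}, then Σ_{m=1}^M t*_m = T; i.e., the deadline constraint holds with equality at any optimal time allocation. -/
/-!
The energy of a single transmission, `x ↦ a x (2^{L/(Bx)} - 1)`, is the perspective of the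
strictly convex function `g u = 2^u - 1`, which vanishes at `0`: with `k = L/B` it equals
`a k (g (k/x) - g 0) / (k/x)`, a secant slope of `g` that grows with `k/x`, so the energy is strictly
decreasing in the allotted time `x`. If an allocation left slack `ε = T - ∑ t m`, handing `ε` to one transmission
would lower the total energy while staying feasible.
-/

open Set Finset

theorem StrictConvexOn.strictAntiOn_perspective {f : ℝ → ℝ} (hf : StrictConvexOn ℝ (Ici 0) f)
    {k : ℝ} (hk : 0 < k) : StrictAntiOn (fun x => x * (f (k / x) - f 0)) (Ioi 0) := by
  intro x (hx : 0 < x) y (hy : 0 < y) hxy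
  have perspective_eq : ∀ z : ℝ, 0 < z →
      z * (f (k / z) - f 0) = k * ((f (k / z) - f 0) / (k / z - 0)) := by
    intro z hz
    rw [sub_zero]
    field_simp
  simp only [perspective_eq x hx, perspective_eq y hy]
  refine mul_lt_mul_of_pos_left ?_ hk
  exact hf.secant_strict_mono self_mem_Ici (div_pos hk hy).le (div_pos hk hx).le
    (div_pos hk hy).ne' (div_pos hk hx).ne' (div_lt_div_of_pos_left hk hx hxy)

theorem strictAntiOn_mul_rpow_div_sub_one {b c : ℝ} (hb : 1 < b) (hc : 0 < c) :
    StrictAntiOn (fun x => x * (b ^ (c / x) - 1)) (Ioi 0) := by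
  have hk : 0 < Real.log b * c := mul_pos (Real.log_pos hb) hc
  convert (strictConvexOn_exp.subset (subset_univ _) (convex_Ici 0)).strictAntiOn_perspective hk
    using 3 with x
  rw [Real.rpow_def_of_pos (by linarith), Real.exp_zero, mul_div_assoc]

theorem strictAntiOn_transmission_energy {a L B : ℝ} (ha : 0 < a) (hL : 0 < L) (hB : 0 < B) :
    StrictAntiOn (fun x => a * x * ((2 : ℝ) ^ (L / (B * x)) - 1)) (Ioi 0) := by
  intro x hx y hy hxy
  simp only [div_mul_eq_div_div, mul_assoc a]
  exact mul_lt_mul_of_pos_left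
    (strictAntiOn_mul_rpow_div_sub_one one_lt_two (div_pos hL hB) hx hy hxy) ha

theorem sum_eq_of_isMinOn_of_strictAntiOn {ι : Type*} [Fintype ι] [Nonempty ι]
    {φ : ι → ℝ → ℝ} (hφ : ∀ i, StrictAntiOn (φ i) (Ioi 0)) {T : ℝ} {t : ι → ℝ}
    (hmin : IsMinOn (fun s : ι → ℝ => ∑ i, φ i (s i))
      {s | (∀ i, s i ∈ Ioc 0 T) ∧ ∑ i, s i ≤ T} t)
    (ht : ∀ i, t i ∈ Ioc 0 T) (hsum : ∑ i, t i ≤ T) : ∑ i, t i = T := by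
  classical
  by_contra hne
  set ε := T - ∑ i, t i with hε_def
  have hε : 0 < ε := sub_pos.mpr (lt_of_le_of_ne hsum hne)
  obtain ⟨i₀⟩ := ‹Nonempty ι›
  set t' := Function.update t i₀ (t i₀ + ε)
  have ht_le_sum : t i₀ ≤ ∑ i, t i :=
    single_le_sum (fun i _ => (ht i).1.le) (mem_univ i₀)
  have ht'_mem : ∀ i, t' i ∈ Ioc 0 T := by
    intro i
    rcases eq_or_ne i i₀ with rfl | hi
    · simp only [t', Function.update_self]
      exact ⟨by linarith [(ht i).1], by linarith⟩
    · simpa only [t', Function.update_of_ne hi] using ht i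
  have ht'_sum : ∑ i, t' i = T := by
    rw [sum_update_of_mem (mem_univ i₀), sdiff_singleton_eq_erase]
    linarith [add_sum_erase univ t (mem_univ i₀)]
  have h_decrease : ∑ i, φ i (t' i) < ∑ i, φ i (t i) := by
    have hlt : φ i₀ (t' i₀) < φ i₀ (t i₀) := by
      simp only [t', Function.update_self]
      exact hφ i₀ (ht i₀).1 (add_pos (ht i₀).1 hε) (lt_add_of_pos_right _ hε)
    refine sum_lt_sum (fun i _ => ?_) ⟨i₀, mem_univ i₀, hlt⟩
    rcases eq_or_ne i i₀ with rfl | hi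
    · exact hlt.le
    · simp only [t', Function.update_of_ne hi, le_refl]
  exact (hmin ⟨ht'_mem, ht'_sum.le⟩).not_gt h_decrease

theorem deadline_constraint_tight_at_optimum_general
    (B T : ℝ) (hB : 0 < B)
    (M : ℕ) (hM : 1 ≤ M) (a L : Fin M → ℝ)
    (ha : ∀ m, 0 < a m) (hL : ∀ m, 0 < L m)
    (t : Fin M → ℝ) (htmem : ∀ m, t m ∈ Set.Ioc (0 : ℝ) T) (htsum : ∑ m, t m ≤ T)
    (hmin : ∀ t' : Fin M → ℝ, (∀ m, t' m ∈ Set.Ioc (0 : ℝ) T) → ∑ m, t' m ≤ T →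
        ∑ m, a m * t m * ((2 : ℝ) ^ (L m / (B * t m)) - 1) ≤
          ∑ m, a m * t' m * ((2 : ℝ) ^ (L m / (B * t' m)) - 1)) :
    ∑ m, t m = T :=
  have : Nonempty (Fin M) := Fin.pos_iff_nonempty.mp hM
  sum_eq_of_isMinOn_of_strictAntiOn
    (fun m => strictAntiOn_transmission_energy (ha m) (hL m) hB)
    (fun t' ht' => hmin t' ht'.1 ht'.2) htmem htsum

/-- At any minimizer of the total transmission energy
`Φ(t) = ∑ m, a m * t m * (2 ^ (L m / (B * t m)) - 1)` over the feasible set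
`{t ∈ (0,T]^M : ∑ m, t m ≤ T}`, the deadline constraint is tight: `∑ m, t m = T`. -/
theorem deadline_constraint_tight_at_optimum
    (B T : ℝ) (hB : 0 < B) (hT : 0 < T)
    (M : ℕ) (hM : 1 ≤ M) (a L : Fin M → ℝ)
    (ha : ∀ m, 0 < a m) (hL : ∀ m, 0 < L m)
    (t : Fin M → ℝ) (htmem : ∀ m, t m ∈ Set.Ioc (0 : ℝ) T) (htsum : ∑ m, t m ≤ T)
    (hmin : ∀ t' : Fin M → ℝ, (∀ m, t' m ∈ Set.Ioc (0 : ℝ) T) → ∑ m, t' m ≤ T →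
        ∑ m, a m * t m * ((2 : ℝ) ^ (L m / (B * t m)) - 1) ≤
          ∑ m, a m * t' m * ((2 : ℝ) ^ (L m / (B * t' m)) - 1)) :
    ∑ m, t m = T :=
  deadline_constraint_tight_at_optimum_general B T hB M hM a L ha hL t htmem htsum hmin
end

section
/- The function Φ attains its infimum over the feasible set {t ∈ (0,T]^M : Σ_{m=1}^M t_m ≤ T} at exactly one point; i.e., the per-state time-allocation problem has a unique optimal solution. -/
/-!
Writing `2 ^ (L / (B t)) = exp (k / t)` with `k = L log 2 / B > 0`, each summand of `Φ` is a
positive multiple of `t (exp (k / t) - 1)`, the perspective of the strictly convex `y ↦ exp y - 1`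
at `k`. So `Φ` is strictly convex on the convex feasible set, which gives uniqueness. Each summand
is also nonnegative and at least of order `k² / (2t)`, so every allocation with a share below
some `ε > 0` costs more than the uniform one; the minimum may therefore be sought on the compact
part of the feasible set where all shares are at least `ε`.
-/

open Real Set Filter Topology Finset

theorem StrictConvexOn.const_mul {E : Type*} [AddCommMonoid E] [Module ℝ E] {s : Set E}
    {f : E → ℝ} {a : ℝ} (ha : 0 < a) (hf : StrictConvexOn ℝ s f) :
    StrictConvexOn ℝ s fun x => a * f x := by
  refine ⟨hf.1, fun x hx y hy hxy p q hp hq hpq => ?_⟩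
  have h := mul_lt_mul_of_pos_left (hf.2 hx hy hxy hp hq hpq) ha
  simp only [smul_eq_mul] at h ⊢
  linarith

/-- `c / (p x + q y)` is the convex combination of `c / x` and `c / y` with weights
`p x / (p x + q y)` and `q y / (p x + q y)`. -/
theorem StrictConvexOn.mul_comp_const_div {φ : ℝ → ℝ} (hφ : StrictConvexOn ℝ univ φ) {c : ℝ}
    (hc : c ≠ 0) : StrictConvexOn ℝ (Ioi 0) fun x => x * φ (c / x) := by
  refine ⟨convex_Ioi 0, fun x (hx : 0 < x) y (hy : 0 < y) hxy p q hp hq hpq => ?_⟩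
  simp only [smul_eq_mul]
  set z := p * x + q * y
  have hz : 0 < z := by positivity
  have hcxy : c / x ≠ c / y := fun h => hxy (by rwa [div_eq_div_iff_comm, div_left_inj' hc] at h)
  have hcomb : p * x / z * (c / x) + q * y / z * (c / y) = c / z := by
    field_simp
    exact hpq
  have hweights : p * x / z + q * y / z = 1 := by
    rw [← add_div, div_self hz.ne']
  have h := hφ.2 (mem_univ _) (mem_univ _) hcxy (by positivity) (by positivity) hweights
  rw [smul_eq_mul, smul_eq_mul, smul_eq_mul, hcomb] at h
  calc z * φ (c / z) < z * (p * x / z * φ (c / x) + q * y / z * φ (c / y)) :=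
        mul_lt_mul_of_pos_left h hz
    _ = p * (x * φ (c / x)) + q * (y * φ (c / y)) := by field_simp

theorem strictConvexOn_mul_exp_div_sub_one {c : ℝ} (hc : c ≠ 0) :
    StrictConvexOn ℝ (Ioi 0) fun x => x * (exp (c / x) - 1) := by
  have h : StrictConvexOn ℝ univ fun y => exp y - 1 := by
    simpa only [Pi.add_def, ← sub_eq_add_neg] using strictConvexOn_exp.add_const (-1)
  exact h.mul_comp_const_div hc

theorem sq_div_two_mul_inv_le_mul_exp_div_sub_one {c x : ℝ} (hc : 0 ≤ c) (hx : 0 < x) :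
    c ^ 2 / 2 * x⁻¹ ≤ x * (exp (c / x) - 1) := by
  have h := quadratic_le_exp_of_nonneg (div_nonneg hc hx.le)
  calc c ^ 2 / 2 * x⁻¹ = x * ((c / x) ^ 2 / 2) := by field_simp
    _ ≤ x * (exp (c / x) - 1) := by gcongr; linarith [div_nonneg hc hx.le]

theorem mul_exp_div_sub_one_nonneg {c x : ℝ} (hc : 0 ≤ c) (hx : 0 < x) :
    0 ≤ x * (exp (c / x) - 1) :=
  mul_nonneg hx.le (sub_nonneg.2 (one_le_exp (div_nonneg hc hx.le)))

theorem tendsto_mul_exp_div_sub_one_nhdsGT_zero {c : ℝ} (hc : 0 < c) :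
    Tendsto (fun x => x * (exp (c / x) - 1)) (𝓝[>] 0) atTop := by
  have hsq : 0 < c ^ 2 / 2 := by positivity
  refine tendsto_atTop_mono' _ ?_ (tendsto_inv_nhdsGT_zero.const_mul_atTop hsq)
  filter_upwards [self_mem_nhdsWithin] with x hx
  exact sq_div_two_mul_inv_le_mul_exp_div_sub_one hc.le hx

theorem IsCompact.exists_isMinOn_of_le_outside {β α : Type*} [TopologicalSpace β]
    [LinearOrder α] [TopologicalSpace α] [ClosedIicTopology α] {K S : Set β} {f : β → α}
    (hK : IsCompact K) (hf : ContinuousOn f K) {x₀ : β} (hx₀ : x₀ ∈ K)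
    (hout : ∀ x ∈ S, x ∉ K → f x₀ ≤ f x) : ∃ x ∈ K, IsMinOn f S x := by
  obtain ⟨x, hxK, hmin⟩ := hK.exists_isMinOn ⟨x₀, hx₀⟩ hf
  refine ⟨x, hxK, fun y hyS => ?_⟩
  by_cases hyK : y ∈ K
  · exact hmin hyK
  · exact (hmin hx₀).trans (hout y hyS hyK)

theorem strictConvexOn_sum_apply {ι : Type*} [Fintype ι] {s : ι → Set ℝ} {f : ι → ℝ → ℝ}
    (hf : ∀ i, StrictConvexOn ℝ (s i) (f i)) :
    StrictConvexOn ℝ (univ.pi s) fun x => ∑ i, f i (x i) := by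
  refine ⟨convex_pi fun i _ => (hf i).1, fun x hx y hy hxy p q hp hq hpq => ?_⟩
  obtain ⟨j, hj⟩ := Function.ne_iff.1 hxy
  simp only [smul_eq_mul, Finset.mul_sum, ← Finset.sum_add_distrib]
  refine Finset.sum_lt_sum (fun i _ => ?_) ⟨j, Finset.mem_univ j, ?_⟩
  · exact (hf i).convexOn.2 (hx i (mem_univ i)) (hy i (mem_univ i)) hp.le hq.le hpq
  · exact (hf j).2 (hx j (mem_univ j)) (hy j (mem_univ j)) hj hp hq hpq

section Allocation

variable {ι : Type*} [Fintype ι] {g : ι → ℝ → ℝ} {T : ℝ}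

def allocations (ι : Type*) [Fintype ι] (T : ℝ) : Set (ι → ℝ) :=
  {t | (∀ i, t i ∈ Ioc 0 T) ∧ ∑ i, t i ≤ T}

theorem allocations_subset_pi : allocations ι T ⊆ univ.pi fun _ => Ioi 0 :=
  fun _ ht i _ => (ht.1 i).1

theorem convex_allocations : Convex ℝ (allocations ι T) := by
  intro x hx y hy p q hp hq hpq
  refine ⟨fun i => convex_Ioc 0 T (hx.1 i) (hy.1 i) hp hq hpq, ?_⟩
  simp only [Pi.add_apply, Pi.smul_apply, smul_eq_mul, Finset.sum_add_distrib,
    ← Finset.mul_sum]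
  calc p * ∑ i, x i + q * ∑ i, y i ≤ p * T + q * T := by gcongr; exacts [hx.2, hy.2]
    _ = T := by rw [← add_mul, hpq, one_mul]

theorem const_mem_allocations (hT : 0 < T) :
    (fun _ => T / Fintype.card ι) ∈ allocations ι T := by
  rcases isEmpty_or_nonempty ι with hι | hι
  · exact ⟨isEmptyElim, by simp [hT.le]⟩
  have hcard : (1 : ℝ) ≤ Fintype.card ι := by exact_mod_cast Fintype.card_pos
  refine ⟨fun _ => ⟨by positivity, div_le_self hT.le hcard⟩, ?_⟩
  simp [Finset.card_univ, mul_div_cancel₀ T (by positivity : (Fintype.card ι : ℝ) ≠ 0)]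

theorem exists_isMinOn_sum_allocations (hT : 0 < T) (hcont : ∀ i, ContinuousOn (g i) (Ioi 0))
    (hnonneg : ∀ i x, 0 < x → 0 ≤ g i x) (hg : ∀ i, Tendsto (g i) (𝓝[>] 0) atTop) :
    ∃ t ∈ allocations ι T, IsMinOn (fun t => ∑ i, g i (t i)) (allocations ι T) t := by
  set Φ : (ι → ℝ) → ℝ := fun t => ∑ i, g i (t i)
  set t₀ : ι → ℝ := fun _ => T / Fintype.card ι
  have ht₀ : t₀ ∈ allocations ι T := const_mem_allocations hT
  obtain ⟨ε, hε, hsmall⟩ : ∃ ε > 0, Set.Ioo 0 ε ⊆ {x | ∀ i, Φ t₀ < g i x} :=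
    (nhdsGT_basis 0).mem_iff.1 (eventually_all.2 fun i => (hg i).eventually_gt_atTop (Φ t₀))
  set K := (univ.pi fun _ => Icc ε T) ∩ {t : ι → ℝ | ∑ i, t i ≤ T}
  have hK : IsCompact K := (isCompact_univ_pi fun _ => isCompact_Icc).inter_right
    (isClosed_le (continuous_finsetSum _ fun i _ => continuous_apply i) continuous_const)
  have hKS : K ⊆ allocations ι T :=
    fun t ht => ⟨fun i => ⟨hε.trans_le (ht.1 i (mem_univ i)).1, (ht.1 i (mem_univ i)).2⟩, ht.2⟩
  have hout : ∀ t ∈ allocations ι T, t ∉ K → Φ t₀ < Φ t := by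
    intro t ht htK
    obtain ⟨i, hi⟩ : ∃ i, t i < ε := by
      by_contra! h
      exact htK ⟨fun i _ => ⟨h i, (ht.1 i).2⟩, ht.2⟩
    calc Φ t₀ < g i (t i) := hsmall ⟨(ht.1 i).1, hi⟩ i
      _ ≤ Φ t := Finset.single_le_sum (fun j _ => hnonneg j _ (ht.1 j).1) (Finset.mem_univ i)
  have hΦ : ContinuousOn Φ K := continuousOn_finsetSum _ fun i _ =>
    (hcont i).comp (continuous_apply i).continuousOn fun t ht => (hKS ht).1 i |>.1
  have ht₀K : t₀ ∈ K := by_contra fun h => (hout t₀ ht₀ h).false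
  obtain ⟨t, htK, hmin⟩ := hK.exists_isMinOn_of_le_outside hΦ ht₀K fun t ht htK =>
    (hout t ht htK).le
  exact ⟨t, hKS htK, hmin⟩

theorem existsUnique_isMinOn_sum_allocations (hT : 0 < T)
    (hconv : ∀ i, StrictConvexOn ℝ (Ioi 0) (g i)) (hnonneg : ∀ i x, 0 < x → 0 ≤ g i x)
    (hg : ∀ i, Tendsto (g i) (𝓝[>] 0) atTop) :
    ∃! t, t ∈ allocations ι T ∧ IsMinOn (fun t => ∑ i, g i (t i)) (allocations ι T) t := by
  obtain ⟨t, ht, hmin⟩ := exists_isMinOn_sum_allocations hT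
    (fun i => (hconv i).convexOn.continuousOn isOpen_Ioi) hnonneg hg
  have hΦ := (strictConvexOn_sum_apply hconv).subset (allocations_subset_pi (T := T))
    convex_allocations
  exact ⟨t, ⟨ht, hmin⟩, fun s ⟨hs, hsmin⟩ => hΦ.eq_of_isMinOn hsmin hmin hs ht⟩

end Allocation

theorem time_allocation_unique_minimizer_general
    (B T : ℝ) (hB : 0 < B) (hT : 0 < T)
    (M : ℕ) (a L : Fin M → ℝ)
    (ha : ∀ m, 0 < a m) (hL : ∀ m, 0 < L m) :
    ∃! t : Fin M → ℝ,
      ((∀ m, t m ∈ Set.Ioc (0 : ℝ) T) ∧ ∑ m, t m ≤ T) ∧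
      ∀ t' : Fin M → ℝ, (∀ m, t' m ∈ Set.Ioc (0 : ℝ) T) → ∑ m, t' m ≤ T →
        ∑ m, a m * t m * ((2 : ℝ) ^ (L m / (B * t m)) - 1) ≤
          ∑ m, a m * t' m * ((2 : ℝ) ^ (L m / (B * t' m)) - 1) := by
  set k : Fin M → ℝ := fun m => log 2 * L m / B
  have hk : ∀ m, 0 < k m := fun m => by have := hL m; positivity
  have hterm : ∀ m x, a m * x * ((2 : ℝ) ^ (L m / (B * x)) - 1) =
      a m * (x * (exp (k m / x) - 1)) := fun m x => by
    rw [rpow_def_of_pos two_pos, mul_div_assoc', div_div, mul_comm B, mul_assoc]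
  simp only [hterm]
  have := existsUnique_isMinOn_sum_allocations (ι := Fin M) hT
    (fun m => (strictConvexOn_mul_exp_div_sub_one (hk m).ne').const_mul (ha m))
    (fun m x hx => mul_nonneg (ha m).le (mul_exp_div_sub_one_nonneg (hk m).le hx))
    (fun m => (tendsto_mul_exp_div_sub_one_nhdsGT_zero (hk m)).const_mul_atTop (ha m))
  simpa only [allocations, isMinOn_iff, mem_ofPred_eq, and_imp] using this

/-- The total transmission energy
`Φ(t) = ∑ m, a m * t m * (2 ^ (L m / (B * t m)) - 1)` attains its infimum over the
feasible set `{t ∈ (0,T]^M : ∑ m, t m ≤ T}` at exactly one point: the per-state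
time-allocation problem has a unique optimal solution. -/
theorem time_allocation_unique_minimizer
    (B T : ℝ) (hB : 0 < B) (hT : 0 < T)
    (M : ℕ) (hM : 1 ≤ M) (a L : Fin M → ℝ)
    (ha : ∀ m, 0 < a m) (hL : ∀ m, 0 < L m) :
    ∃! t : Fin M → ℝ,
      ((∀ m, t m ∈ Set.Ioc (0 : ℝ) T) ∧ ∑ m, t m ≤ T) ∧
      ∀ t' : Fin M → ℝ, (∀ m, t' m ∈ Set.Ioc (0 : ℝ) T) → ∑ m, t' m ≤ T →
        ∑ m, a m * t m * ((2 : ℝ) ^ (L m / (B * t m)) - 1) ≤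
          ∑ m, a m * t' m * ((2 : ℝ) ^ (L m / (B * t' m)) - 1) :=
  time_allocation_unique_minimizer_general B T hB hT M a L ha hL
end

section
/- There exist λ ≥ 0 and t ∈ (0,T]^M with Σ_{m=1}^M t_m = T such that, for every m ∈ {1,…,M}, the component t_m minimizes the per-task Lagrangian cost s ↦ a_m·s·(2^{L_m/(B·s)} − 1) + λ·s over s ∈ (0,T]. (This is the existence of the multiplier λ^{0†} for which the closed-form durations exhaust the deadline T exactly.) -/
/-!
Write `2 ^ (L / (B s)) = exp (k / s)` with `k = L log 2 / B`. The derivative of the cost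
`s ↦ a s (exp (k / s) - 1) + λ s` is `λ - a E (k / s)` with `E x = exp x (x - 1) + 1`
increasing, so on `(0, T]` the cost is minimised at `t(λ) = min (T, k / E⁻¹ (λ / a))`,
which is continuous in `λ`. The total duration `∑ t_m(λ)` is `M T ≥ T` at `λ = 0` and at
most `T` once `λ ≥ ∑ a_m E (M k_m / T)`, so the intermediate value theorem yields the
multiplier.
-/

open Real Set Filter

/-- For `x ≥ 0` this is `x f' x - f x` with `f = exp - 1`, so that the derivative of
`s ↦ s f (k / s)` is `-tangentGap (k / s)`. It is extended by the identity on `x ≤ 0` to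
obtain an order isomorphism of `ℝ`. -/
noncomputable def tangentGap (x : ℝ) : ℝ :=
  if x ≤ 0 then x else exp x * (x - 1) + 1

lemma tangentGap_of_nonpos {x : ℝ} (hx : x ≤ 0) : tangentGap x = x := if_pos hx

lemma tangentGap_eqOn_Ici : EqOn tangentGap (fun x ↦ exp x * (x - 1) + 1) (Ici 0) := by
  intro x hx
  rcases (mem_Ici.mp hx).eq_or_lt with rfl | hx
  · simp [tangentGap]
  · exact if_neg hx.not_ge

lemma continuous_tangentGap : Continuous tangentGap :=
  Continuous.if_le continuous_id (by fun_prop) continuous_id continuous_const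
    fun x hx ↦ by simp [hx]

lemma strictMono_tangentGap : StrictMono tangentGap := by
  refine StrictMonoOn.Iic_union_Ici (a := 0) ?_ ?_
  · exact (strictMonoOn_id (s := Iic 0)).congr fun x hx ↦ (tangentGap_of_nonpos hx).symm
  · refine StrictMonoOn.congr ?_ tangentGap_eqOn_Ici.symm
    refine strictMonoOn_of_hasDerivWithinAt_pos (convex_Ici 0) (by fun_prop)
      (f' := fun x ↦ exp x * x) (fun x _ ↦ ?_) fun x hx ↦ ?_
    · refine (((hasDerivAt_exp x).mul ((hasDerivAt_id x).sub_const 1)).add_const 1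
        |>.congr_deriv ?_).hasDerivWithinAt
      simp only [id_eq]; ring
    · rw [interior_Ici] at hx
      exact mul_pos (exp_pos x) hx

lemma le_tangentGap {x : ℝ} (hx : 1 ≤ x) : x ≤ tangentGap x := by
  rw [tangentGap_eqOn_Ici (mem_Ici.mpr (by linarith))]
  nlinarith [add_one_le_exp x]

lemma surjective_tangentGap : Function.Surjective tangentGap :=
  continuous_tangentGap.surjective
    (tendsto_atTop_mono' _ (eventually_ge_atTop 1 |>.mono fun _ ↦ le_tangentGap) tendsto_id)
    (tendsto_id.congr' <| eventually_le_atBot 0 |>.mono fun _ hx ↦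
      (tangentGap_of_nonpos hx).symm)

noncomputable def tangentGapIso : ℝ ≃o ℝ :=
  strictMono_tangentGap.orderIsoOfSurjective _ surjective_tangentGap

@[simp] lemma tangentGapIso_apply (x : ℝ) : tangentGapIso x = tangentGap x := rfl

lemma tangentGap_nonneg {x : ℝ} (hx : 0 ≤ x) : 0 ≤ tangentGap x :=
  (tangentGap_of_nonpos le_rfl).symm.le.trans (strictMono_tangentGap.monotone hx)

lemma isMinOn_Ioc_of_hasDerivAt {f f' : ℝ → ℝ} {a b t : ℝ}
    (hf : ∀ x ∈ Ioc a b, HasDerivAt f (f' x) x) (ht : t ∈ Ioc a b)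
    (hf'_nonpos : ∀ x ∈ Ioo a t, f' x ≤ 0) (hf'_nonneg : ∀ x ∈ Ioo t b, 0 ≤ f' x) :
    IsMinOn f (Ioc a b) t := by
  have hcont : ContinuousOn f (Ioc a b) := fun x hx ↦ (hf x hx).continuousAt.continuousWithinAt
  have hderiv {s : Set ℝ} (hs : s ⊆ Ioc a b) (x : ℝ) (hx : x ∈ interior s) :
      HasDerivWithinAt f (f' x) (interior s) x :=
    (hf x (hs (interior_subset hx))).hasDerivWithinAt
  have hleft : Ioc a t ⊆ Ioc a b := Ioc_subset_Ioc_right ht.2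
  have hright : Icc t b ⊆ Ioc a b := fun x hx ↦ ⟨ht.1.trans_le hx.1, hx.2⟩
  have hanti : AntitoneOn f (Ioc a t) :=
    antitoneOn_of_hasDerivWithinAt_nonpos (convex_Ioc a t) (hcont.mono hleft) (hderiv hleft)
      (by simpa only [interior_Ioc] using hf'_nonpos)
  have hmono : MonotoneOn f (Icc t b) :=
    monotoneOn_of_hasDerivWithinAt_nonneg (convex_Icc t b) (hcont.mono hright) (hderiv hright)
      (by simpa only [interior_Icc] using hf'_nonneg)
  intro s hs
  rcases le_or_gt s t with hst | hts
  · exact hanti ⟨hs.1, hst⟩ ⟨ht.1, le_rfl⟩ hst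
  · exact hmono ⟨le_rfl, ht.2⟩ ⟨hts.le, hs.2⟩ hts.le

noncomputable def lagrangianCost (a k lam s : ℝ) : ℝ :=
  a * s * (exp (k / s) - 1) + lam * s

lemma hasDerivAt_lagrangianCost (a lam : ℝ) {k s : ℝ} (hk : 0 < k) (hs : 0 < s) :
    HasDerivAt (lagrangianCost a k lam) (lam - a * tangentGap (k / s)) s := by
  have hks : HasDerivAt (fun y ↦ k / y) (-(k / s ^ 2)) s := by
    simpa [div_eq_mul_inv] using (hasDerivAt_inv hs.ne').const_mul k
  have := (((hasDerivAt_id s).const_mul a).mul (hks.exp.sub_const 1)).add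
    ((hasDerivAt_id s).const_mul lam)
  refine this.congr_deriv ?_
  rw [tangentGap_eqOn_Ici (mem_Ici.mpr (div_pos hk hs).le), id_eq]
  field_simp
  ring

/-- `k / optimalDuration` is the larger of the deadline rate `k / T` and the stationary rate
`x` solving `a * tangentGap x = lam`; in this form it is `T` for `lam ≤ 0` and continuous in
`lam` on all of `ℝ`. -/
noncomputable def optimalDuration (a k T lam : ℝ) : ℝ :=
  k / max (k / T) (tangentGapIso.symm (lam / a))

section optimalDuration

variable {a k T : ℝ}

lemma optimalDuration_mem_Ioc (hk : 0 < k) (hT : 0 < T) (lam : ℝ) :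
    optimalDuration a k T lam ∈ Ioc 0 T := by
  have hkT : 0 < k / T := div_pos hk hT
  refine ⟨div_pos hk (hkT.trans_le (le_max_left _ _)), ?_⟩
  calc optimalDuration a k T lam ≤ k / (k / T) :=
        div_le_div_of_nonneg_left hk.le hkT (le_max_left _ _)
    _ = T := by field_simp

lemma optimalDuration_zero (hk : 0 < k) (hT : 0 < T) : optimalDuration a k T 0 = T := by
  have hsymm : tangentGapIso.symm 0 = 0 := by
    rw [OrderIso.symm_apply_eq, tangentGapIso_apply, tangentGap_of_nonpos le_rfl]
  rw [optimalDuration, zero_div, hsymm, max_eq_left (div_pos hk hT).le]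
  field_simp

lemma continuous_optimalDuration (hk : 0 < k) (hT : 0 < T) :
    Continuous (optimalDuration a k T) :=
  continuous_const.div
    (continuous_const.max (tangentGapIso.symm.continuous.comp (continuous_id.div_const a)))
    fun _ ↦ ((div_pos hk hT).trans_le (le_max_left _ _)).ne'

lemma optimalDuration_le_div (ha : 0 < a) (hk : 0 < k) (hT : 0 < T) {n lam : ℝ} (hn : 0 < n)
    (hlam : a * tangentGap (n * k / T) ≤ lam) : optimalDuration a k T lam ≤ T / n := by
  have hrate : n * k / T ≤ tangentGapIso.symm (lam / a) := by
    rw [OrderIso.le_symm_apply, tangentGapIso_apply, le_div_iff₀' ha]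
    exact hlam
  calc optimalDuration a k T lam ≤ k / (n * k / T) :=
        div_le_div_of_nonneg_left hk.le (by positivity) (hrate.trans (le_max_right _ _))
    _ = T / n := by field_simp

lemma isMinOn_lagrangianCost_optimalDuration (ha : 0 < a) (hk : 0 < k) (hT : 0 < T) (lam : ℝ) :
    IsMinOn (lagrangianCost a k lam) (Ioc 0 T) (optimalDuration a k T lam) := by
  set r := max (k / T) (tangentGapIso.symm (lam / a))
  have hr : 0 < r := (div_pos hk hT).trans_le (le_max_left _ _)
  refine isMinOn_Ioc_of_hasDerivAt (fun s hs ↦ hasDerivAt_lagrangianCost a lam hk hs.1)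
    (optimalDuration_mem_Ioc hk hT lam) (fun s hs ↦ ?_) fun s hs ↦ ?_
  · have hrs : r < k / s := (lt_div_comm₀ hs.1 hr).mp hs.2
    have : lam / a ≤ tangentGap (k / s) := by
      rw [← tangentGapIso_apply, ← OrderIso.symm_apply_le]
      exact (le_max_right _ _).trans hrs.le
    rw [div_le_iff₀' ha] at this
    linarith
  · have hs_pos : 0 < s := (optimalDuration_mem_Ioc hk hT lam).1.trans hs.1
    have hsr : k / s < r := (div_lt_comm₀ hr hs_pos).mp hs.1
    have hks : k / s < tangentGapIso.symm (lam / a) :=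
      (lt_max_iff.mp hsr).resolve_left (div_lt_div_of_pos_left hk hs_pos hs.2).not_gt
    have : tangentGap (k / s) ≤ lam / a := by
      rw [← tangentGapIso_apply, ← OrderIso.le_symm_apply]
      exact hks.le
    rw [le_div_iff₀' ha] at this
    linarith

end optimalDuration

lemma rpow_div_mul_eq_exp {c : ℝ} (hc : 0 < c) (L B s : ℝ) :
    c ^ (L / (B * s)) = exp (log c * L / B / s) := by
  rw [rpow_def_of_pos hc]
  ring_nf

/-- Existence of the multiplier `λ^{0†}`: there exist `λ ≥ 0` and `t ∈ (0,T]^M` with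
`∑ m, t m = T` such that each `t m` minimizes the per-task Lagrangian cost
`s ↦ a m * s * (2 ^ (L m / (B * s)) - 1) + λ * s` over `s ∈ (0,T]`. -/
theorem multiplier_with_tight_deadline_exists
    (B T : ℝ) (hB : 0 < B) (hT : 0 < T)
    (M : ℕ) (hM : 1 ≤ M) (a L : Fin M → ℝ)
    (ha : ∀ m, 0 < a m) (hL : ∀ m, 0 < L m) :
    ∃ (lam : ℝ) (t : Fin M → ℝ), 0 ≤ lam ∧ (∀ m, t m ∈ Set.Ioc (0 : ℝ) T) ∧
      (∑ m, t m = T) ∧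
      ∀ m, ∀ s ∈ Set.Ioc (0 : ℝ) T,
        a m * t m * ((2 : ℝ) ^ (L m / (B * t m)) - 1) + lam * t m ≤
          a m * s * ((2 : ℝ) ^ (L m / (B * s)) - 1) + lam * s := by
  set k : Fin M → ℝ := fun m ↦ log 2 * L m / B
  have hk (m : Fin M) : 0 < k m := div_pos (mul_pos (log_pos one_lt_two) (hL m)) hB
  set total : ℝ → ℝ := fun lam ↦ ∑ m, optimalDuration (a m) (k m) T lam
  have htotal_cont : Continuous total :=
    continuous_finsetSum _ fun m _ ↦ continuous_optimalDuration (hk m) hT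
  have htotal_zero : T ≤ total 0 := by
    simp only [total, optimalDuration_zero (hk _) hT, Finset.sum_const, Finset.card_univ,
      Fintype.card_fin, nsmul_eq_mul]
    exact le_mul_of_one_le_left hT.le (by exact_mod_cast hM)
  set lam₁ := ∑ m, a m * tangentGap (M * k m / T)
  have hterm_nonneg (m : Fin M) : 0 ≤ a m * tangentGap (M * k m / T) :=
    mul_nonneg (ha m).le (tangentGap_nonneg (by have := hk m; positivity))
  have htotal_lam₁ : total lam₁ ≤ T := by
    have hM_pos : (0 : ℝ) < M := by exact_mod_cast hM
    calc total lam₁ ≤ ∑ _m : Fin M, T / M :=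
          Finset.sum_le_sum fun m _ ↦ optimalDuration_le_div (ha m) (hk m) hT hM_pos
            (Finset.single_le_sum (fun m _ ↦ hterm_nonneg m) (Finset.mem_univ m))
      _ = T := by
          simp only [Finset.sum_const, Finset.card_univ, Fintype.card_fin, nsmul_eq_mul]
          field_simp
  obtain ⟨lam, ⟨hlam, -⟩, htotal⟩ :=
    intermediate_value_Icc' (Finset.sum_nonneg fun m _ ↦ hterm_nonneg m)
      htotal_cont.continuousOn ⟨htotal_lam₁, htotal_zero⟩
  refine ⟨lam, fun m ↦ optimalDuration (a m) (k m) T lam, hlam,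
    fun m ↦ optimalDuration_mem_Ioc (hk m) hT lam, htotal, fun m s hs ↦ ?_⟩
  simp only [rpow_div_mul_eq_exp two_pos]
  exact isMinOn_iff.mp (isMinOn_lagrangianCost_optimalDuration (ha m) (hk m) hT lam) s hs
end
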